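/- Let I₁ be the modified Bessel function of the first kind of order one. There exists a constant C > 0 such that for every ξ ≠ 0: (i) ∫₀¹ |I₁(|ξ|r)|² r dr ≤ C · min{1, |ξ|^{−1}} · (I₁(|ξ|))²; (ii) ∫₀¹ |(d/dr)(r I₁(|ξ|r))|² (1/r) dr ≤ C · max{1, |ξ|} · (I₁(|ξ|))²; (iii) ∫₀¹ |𝓛(I₁(|ξ|·))(r)|² r dr ≤ C · min{1, |ξ|^{−1}} · ξ⁴ · (I₁(|ξ|))²; (iv) ∫₀¹ |(d/dr)(r · 𝓛(I₁(|ξ|·))(r))|² (1/r) dr ≤ C · max{1, |ξ|} · ξ⁴ · (I₁(|ξ|))². -/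

import Mathlib

/-!
Write `I₁(x) = (x/2) F₁((x/2)²)` and `I₀(x) = F₀((x/2)²)` with `F_m(z) = ∑ z^k / (k! (k+m)!)`.
Termwise differentiation gives `I₀' = I₁` and `(x I₁)' = x I₀`. Hence `I₀(a r)/a` and `r I₁(a r)`
are primitives of `I₁(a r)` and `a r I₀(a r)`, and `𝓛(I₁(a·)) = a² I₁(a·)` on `r > 0`, so that
(iii) and (iv) are `a⁴` times (i) and (ii). As `I₀, I₁` increase on `[0, ∞)`, the integrands of
(i) and (ii) are at most `I₁(a) I₁(a r)` and `a I₀(a) · a r I₀(a r)`, with integrals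
`I₁(a) (I₀(a) - 1)/a` and `a I₀(a) I₁(a)`. The bounds then follow from `I₁(x) ≥ x/2` and the
termwise AM-GM estimate `I₀ ≤ 1 + 2 I₁` on `[0, ∞)`.
-/

open MeasureTheory Set

/-- The operator `(𝓛 g)(r) = g''(r) + g'(r)/r − g(r)/r²`. -/
noncomputable def Lop (g : ℝ → ℂ) : ℝ → ℂ := fun r =>
  deriv (deriv g) r + deriv g r / (r : ℂ) - g r / (r : ℂ) ^ 2

/-- The modified Bessel function of the first kind of order one,
`I₁(x) = Σ_{k=0}^∞ (1/(k!·(k+1)!)) (x/2)^{2k+1}`. -/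
noncomputable def besselI1 (x : ℝ) : ℝ :=
  ∑' k : ℕ, (1 / ((Nat.factorial k : ℝ) * (Nat.factorial (k + 1) : ℝ))) * (x / 2) ^ (2 * k + 1)

open Filter Topology Nat

theorem hasDerivAt_tsum_mul_pow {c : ℕ → ℝ} (hc : ∀ R, Summable fun n => |c n| * R ^ n)
    (x : ℝ) :
    HasDerivAt (fun y => ∑' n, c n * y ^ n) (∑' n, (n + 1) * c (n + 1) * x ^ n) x := by
  set R := |x| + 1
  have hR : 1 ≤ R := le_add_of_nonneg_left (abs_nonneg x)
  have hx : x ∈ Ioo (-R) R := abs_lt.1 (lt_add_one _)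
  -- `n ≤ 2 ^ n` makes `|c n| (2R)^n` dominate the differentiated terms on `(-R, R)`
  have hbound : ∀ n, ∀ y ∈ Ioo (-R) R, ‖c n * (n * y ^ (n - 1))‖ ≤ |c n| * (2 * R) ^ n := by
    intro n y hy
    rw [norm_mul, norm_mul, norm_pow, Real.norm_eq_abs, Real.norm_eq_abs, Real.norm_eq_abs,
      Nat.abs_cast, mul_pow]
    gcongr
    · exact_mod_cast (Nat.lt_two_pow_self).le
    · calc |y| ^ (n - 1) ≤ R ^ (n - 1) := by gcongr; exact abs_lt.2 hy |>.le
        _ ≤ R ^ n := pow_le_pow_right₀ hR (Nat.sub_le n 1)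
  have hsum : Summable fun n => c n * x ^ n :=
    (hc |x|).of_norm_bounded fun n => by rw [norm_mul, norm_pow, Real.norm_eq_abs, Real.norm_eq_abs]
  have hderiv := hasDerivAt_tsum_of_isPreconnected (hc (2 * R)) isOpen_Ioo isPreconnected_Ioo
    (fun n y _ => (hasDerivAt_pow n y).const_mul (c n)) hbound hx hsum hx
  have hsum' : Summable fun n => c n * (n * x ^ (n - 1)) :=
    (hc (2 * R)).of_norm_bounded fun n => hbound n x hx
  refine hderiv.congr_deriv ?_
  rw [hsum'.tsum_eq_zero_add]
  simp only [CharP.cast_eq_zero, zero_mul, mul_zero, zero_add, cast_add, cast_one,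
    add_tsub_cancel_right]
  exact tsum_congr fun n => by ring

noncomputable def besselCoeff (m k : ℕ) : ℝ := ((k ! * (k + m)! : ℕ) : ℝ)⁻¹

/-- `I_m(x) = (x/2)^m · besselSeries m ((x/2)^2)`. -/
noncomputable def besselSeries (m : ℕ) (z : ℝ) : ℝ := ∑' k, besselCoeff m k * z ^ k

lemma besselCoeff_nonneg (m k : ℕ) : 0 ≤ besselCoeff m k := by
  unfold besselCoeff; positivity

lemma besselCoeff_le_inv_factorial (m k : ℕ) : besselCoeff m k ≤ (k ! : ℝ)⁻¹ := by
  unfold besselCoeff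
  exact inv_anti₀ (by positivity) (by exact_mod_cast Nat.le_mul_of_pos_right _ (factorial_pos _))

lemma summable_abs_besselCoeff_mul_pow (m : ℕ) (R : ℝ) :
    Summable fun k => |besselCoeff m k| * R ^ k :=
  (Real.summable_pow_div_factorial |R|).of_norm_bounded fun k => by
    rw [norm_mul, norm_pow, Real.norm_eq_abs, Real.norm_eq_abs, abs_abs, div_eq_inv_mul]
    gcongr
    exact (abs_of_nonneg (besselCoeff_nonneg m k)).trans_le (besselCoeff_le_inv_factorial m k)

lemma summable_besselCoeff_mul_pow (m : ℕ) (z : ℝ) :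
    Summable fun k => besselCoeff m k * z ^ k :=
  (summable_abs_besselCoeff_mul_pow m |z|).of_norm_bounded fun k => by
    rw [norm_mul, norm_pow, Real.norm_eq_abs, Real.norm_eq_abs]

lemma succ_mul_besselCoeff_succ (m k : ℕ) :
    (k + 1) * besselCoeff m (k + 1) = besselCoeff (m + 1) k := by
  simp only [besselCoeff, show k + 1 + m = k + (m + 1) by omega, factorial_succ k]
  push_cast
  field_simp

theorem hasDerivAt_besselSeries (m : ℕ) (z : ℝ) :
    HasDerivAt (besselSeries m) (besselSeries (m + 1) z) z := by
  have h := hasDerivAt_tsum_mul_pow (summable_abs_besselCoeff_mul_pow m) z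
  simp only [succ_mul_besselCoeff_succ] at h
  exact h

@[fun_prop]
theorem continuous_besselSeries (m : ℕ) : Continuous (besselSeries m) :=
  continuous_iff_continuousAt.2 fun z => (hasDerivAt_besselSeries m z).continuousAt

lemma besselCoeff_succ_eq_add (m k : ℕ) :
    besselCoeff m (k + 1) = (m + 1) * besselCoeff (m + 1) (k + 1) + besselCoeff (m + 2) k := by
  simp only [besselCoeff, show k + 1 + (m + 1) = (k + 1 + m) + 1 by omega,
    show k + (m + 2) = (k + 1 + m) + 1 by omega, factorial_succ k, factorial_succ (k + 1 + m)]
  push_cast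
  field_simp
  ring

theorem besselSeries_eq_add (m : ℕ) (z : ℝ) :
    besselSeries m z = (m + 1) * besselSeries (m + 1) z + z * besselSeries (m + 2) z := by
  have hsum₁ := summable_besselCoeff_mul_pow m z
  have hsum₂ := (summable_besselCoeff_mul_pow (m + 1) z).mul_left ((m : ℝ) + 1)
  have hdiff : besselSeries m z - (m + 1) * besselSeries (m + 1) z
      = ∑' k, (besselCoeff m k - (m + 1) * besselCoeff (m + 1) k) * z ^ k := by
    rw [besselSeries, besselSeries, ← tsum_mul_left, ← hsum₁.tsum_sub hsum₂]
    exact tsum_congr fun k => by ring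
  have hzero : besselCoeff m 0 = (m + 1) * besselCoeff (m + 1) 0 := by
    simp only [besselCoeff, factorial_zero, one_mul, zero_add, factorial_succ m]
    push_cast
    field_simp
  rw [eq_add_of_sub_eq' hdiff]
  congr 1
  rw [((hsum₁.sub hsum₂).congr fun k => by ring).tsum_eq_zero_add, hzero, sub_self, zero_mul,
    zero_add, besselSeries, ← tsum_mul_left]
  exact tsum_congr fun k => by rw [besselCoeff_succ_eq_add]; ring

lemma besselSeries_nonneg (m : ℕ) {z : ℝ} (hz : 0 ≤ z) : 0 ≤ besselSeries m z :=
  tsum_nonneg fun k => mul_nonneg (besselCoeff_nonneg m k) (pow_nonneg hz k)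

lemma besselSeries_mono (m : ℕ) {z w : ℝ} (hz : 0 ≤ z) (hzw : z ≤ w) :
    besselSeries m z ≤ besselSeries m w :=
  Summable.tsum_le_tsum (fun k => by gcongr; exact besselCoeff_nonneg m k)
    (summable_besselCoeff_mul_pow m z) (summable_besselCoeff_mul_pow m w)

lemma inv_factorial_le_besselSeries (m : ℕ) {z : ℝ} (hz : 0 ≤ z) :
    (m ! : ℝ)⁻¹ ≤ besselSeries m z := by
  have h := (summable_besselCoeff_mul_pow m z).le_tsum 0 fun k _ =>
    mul_nonneg (besselCoeff_nonneg m k) (pow_nonneg hz k)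
  calc (m ! : ℝ)⁻¹ = besselCoeff m 0 * z ^ 0 := by simp [besselCoeff]
    _ ≤ besselSeries m z := h

lemma besselCoeff_zero_succ_mul_pow_le (k : ℕ) {y : ℝ} (hy : 0 ≤ y) :
    besselCoeff 0 (k + 1) * (y ^ 2) ^ (k + 1)
      ≤ y * (besselCoeff 1 k * (y ^ 2) ^ k) + y * (besselCoeff 1 (k + 1) * (y ^ 2) ^ (k + 1)) := by
  have hF : 0 < (k ! : ℝ) := by positivity
  have hk : (0 : ℝ) ≤ k := k.cast_nonneg
  have hquad : 0 ≤ (k + 1) * (k + 2) + y ^ 2 - (k + 2) * y := by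
    nlinarith [sq_nonneg (y - (k + 2) / 2)]
  have hdiff : y * (besselCoeff 1 k * (y ^ 2) ^ k) + y * (besselCoeff 1 (k + 1) * (y ^ 2) ^ (k + 1))
      - besselCoeff 0 (k + 1) * (y ^ 2) ^ (k + 1)
      = y * (y ^ 2) ^ k / ((k + 1) ^ 2 * (k + 2) * (k ! : ℝ) ^ 2)
        * ((k + 1) * (k + 2) + y ^ 2 - (k + 2) * y) := by
    simp only [besselCoeff, add_zero, factorial_succ]
    push_cast
    field_simp
    ring
  have : 0 ≤ y * (y ^ 2) ^ k / ((k + 1) ^ 2 * (k + 2) * (k ! : ℝ) ^ 2)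
      * ((k + 1) * (k + 2) + y ^ 2 - (k + 2) * y) := by positivity
  linarith

theorem besselSeries_zero_sq_le {y : ℝ} (hy : 0 ≤ y) :
    besselSeries 0 (y ^ 2) ≤ 1 + 2 * y * besselSeries 1 (y ^ 2) := by
  have hs₀ := summable_besselCoeff_mul_pow 0 (y ^ 2)
  have hs₁ := (summable_besselCoeff_mul_pow 1 (y ^ 2)).mul_left y
  have hs₁' := (summable_nat_add_iff 1).2 hs₁
  have htail : ∑' k, y * (besselCoeff 1 (k + 1) * (y ^ 2) ^ (k + 1))
      ≤ y * besselSeries 1 (y ^ 2) := by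
    rw [besselSeries, ← tsum_mul_left, hs₁.tsum_eq_zero_add]
    have : 0 ≤ y * (besselCoeff 1 0 * (y ^ 2) ^ 0) :=
      mul_nonneg hy (mul_nonneg (besselCoeff_nonneg 1 0) (pow_nonneg (sq_nonneg y) 0))
    linarith
  have hshift :
      ∑' k, besselCoeff 0 (k + 1) * (y ^ 2) ^ (k + 1) ≤ 2 * y * besselSeries 1 (y ^ 2) := by
    calc ∑' k, besselCoeff 0 (k + 1) * (y ^ 2) ^ (k + 1)
        ≤ ∑' k, (y * (besselCoeff 1 k * (y ^ 2) ^ k)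
            + y * (besselCoeff 1 (k + 1) * (y ^ 2) ^ (k + 1))) :=
          Summable.tsum_le_tsum (fun k => besselCoeff_zero_succ_mul_pow_le k hy)
            ((summable_nat_add_iff 1).2 hs₀) (hs₁.add hs₁')
      _ ≤ 2 * y * besselSeries 1 (y ^ 2) := by
          rw [hs₁.tsum_add hs₁', tsum_mul_left]
          unfold besselSeries at htail ⊢
          linarith
  rw [besselSeries, hs₀.tsum_eq_zero_add]
  simpa [besselCoeff] using hshift

noncomputable def besselI0 (x : ℝ) : ℝ := besselSeries 0 ((x / 2) ^ 2)

lemma besselI1_eq (x : ℝ) : besselI1 x = x / 2 * besselSeries 1 ((x / 2) ^ 2) := by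
  rw [besselI1, besselSeries, ← tsum_mul_left]
  refine tsum_congr fun k => ?_
  rw [besselCoeff, pow_succ, pow_mul]
  push_cast
  ring

lemma hasDerivAt_half_sq (x : ℝ) : HasDerivAt (fun x : ℝ => (x / 2) ^ 2) (x / 2) x :=
  (((hasDerivAt_id x).div_const 2).fun_pow 2).congr_deriv
    (by simp only [cast_ofNat, id_eq, Nat.add_one_sub_one, pow_one, one_div]; ring)

theorem hasDerivAt_besselI0 (x : ℝ) : HasDerivAt besselI0 (besselI1 x) x :=
  ((hasDerivAt_besselSeries 0 _).comp x (hasDerivAt_half_sq x)).congr_deriv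
    (by rw [besselI1_eq]; ring)

theorem hasDerivAt_mul_besselI1 (x : ℝ) :
    HasDerivAt (fun x => x * besselI1 x) (x * besselI0 x) x := by
  have hF := (hasDerivAt_id ((x / 2) ^ 2)).mul (hasDerivAt_besselSeries 1 ((x / 2) ^ 2))
  have h := ((hF.comp x (hasDerivAt_half_sq x)).const_mul 2).congr_deriv
    (show _ = x * besselI0 x by
      rw [besselI0, besselSeries_eq_add 0]
      simp only [one_mul, id_eq, reduceAdd, CharP.cast_eq_zero, zero_add]
      ring)
  refine h.congr_of_eventuallyEq (Eventually.of_forall fun y => ?_)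
  simp only [Function.comp, Pi.mul_apply, id, besselI1_eq]
  ring

theorem hasDerivAt_besselI1 {x : ℝ} (hx : x ≠ 0) :
    HasDerivAt besselI1 (besselI0 x - besselI1 x / x) x := by
  have h := (hasDerivAt_mul_besselI1 x).div (hasDerivAt_id x) hx
  have hev : (fun y => y * besselI1 y / id y) =ᶠ[𝓝 x] besselI1 :=
    (eventually_ne_nhds hx).mono fun y hy => by simp [hy]
  refine (h.congr_of_eventuallyEq hev.symm).congr_deriv ?_
  simp only [id]
  field_simp

@[fun_prop]
theorem continuous_besselI0 : Continuous besselI0 := by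
  unfold besselI0; fun_prop

@[fun_prop]
theorem continuous_besselI1 : Continuous besselI1 := by
  rw [funext besselI1_eq]
  fun_prop

lemma besselI0_zero : besselI0 0 = 1 := by
  rw [besselI0, besselSeries, tsum_eq_single 0 fun k hk => by simp [hk]]
  simp [besselCoeff]

lemma besselI0_nonneg (x : ℝ) : 0 ≤ besselI0 x :=
  besselSeries_nonneg 0 (sq_nonneg _)

lemma besselI1_nonneg {x : ℝ} (hx : 0 ≤ x) : 0 ≤ besselI1 x := by
  rw [besselI1_eq]
  exact mul_nonneg (by positivity) (besselSeries_nonneg 1 (sq_nonneg _))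

lemma besselI0_le_of_le {x y : ℝ} (hx : 0 ≤ x) (hxy : x ≤ y) : besselI0 x ≤ besselI0 y :=
  besselSeries_mono 0 (sq_nonneg _) (by gcongr)

lemma besselI1_le_of_le {x y : ℝ} (hx : 0 ≤ x) (hxy : x ≤ y) : besselI1 x ≤ besselI1 y := by
  rw [besselI1_eq, besselI1_eq]
  have hxy' : (x / 2) ^ 2 ≤ (y / 2) ^ 2 := by gcongr
  exact mul_le_mul (by linarith) (besselSeries_mono 1 (sq_nonneg _) hxy')
    (besselSeries_nonneg 1 (sq_nonneg _)) (by linarith)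

lemma half_le_besselI1 {x : ℝ} (hx : 0 ≤ x) : x / 2 ≤ besselI1 x := by
  rw [besselI1_eq]
  have := inv_factorial_le_besselSeries 1 (sq_nonneg (x / 2))
  simp only [factorial_one, cast_one, inv_one] at this
  nlinarith

lemma besselI0_le_one_add_two_mul_besselI1 {x : ℝ} (hx : 0 ≤ x) :
    besselI0 x ≤ 1 + 2 * besselI1 x := by
  have := besselSeries_zero_sq_le (by positivity : 0 ≤ x / 2)
  rw [besselI0, besselI1_eq]
  linarith

lemma mul_besselI0_le {x : ℝ} (hx : 0 ≤ x) : x * besselI0 x ≤ 4 * max 1 x * besselI1 x := by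
  have h₀ := besselI0_le_one_add_two_mul_besselI1 hx
  have h₁ := half_le_besselI1 hx
  have h₁' := besselI1_nonneg hx
  have h1 : 1 ≤ max 1 x := le_max_left 1 x
  have hx' : x ≤ max 1 x := le_max_right 1 x
  nlinarith [mul_le_mul_of_nonneg_left h₀ hx, mul_le_mul_of_nonneg_right h1 h₁',
    mul_le_mul_of_nonneg_right hx' h₁']

lemma integral_Ioo_eq_sub_of_hasDerivAt {f f' : ℝ → ℝ} {a b : ℝ} (hab : a ≤ b)
    (hf : ∀ r ∈ Icc a b, HasDerivAt f (f' r) r) (hf' : IntervalIntegrable f' volume a b) :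
    ∫ r in Ioo a b, f' r = f b - f a := by
  rw [← integral_Ioc_eq_integral_Ioo, ← intervalIntegral.integral_of_le hab]
  exact intervalIntegral.integral_eq_sub_of_hasDerivAt (fun r hr => hf r (uIcc_of_le hab ▸ hr)) hf'

lemma integrableOn_Ioo_of_continuous {f : ℝ → ℝ} (hf : Continuous f) (a b : ℝ) :
    IntegrableOn f (Ioo a b) :=
  (hf.integrableOn_Icc).mono_set Ioo_subset_Icc_self

theorem integral_besselI1_comp {a : ℝ} (ha : a ≠ 0) :
    ∫ r in Ioo (0 : ℝ) 1, besselI1 (a * r) = (besselI0 a - 1) / a := by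
  have hf : ∀ r ∈ Icc (0 : ℝ) 1,
      HasDerivAt (fun r => besselI0 (a * r) / a) (besselI1 (a * r)) r := fun r _ =>
    (((hasDerivAt_besselI0 (a * r)).comp r (hasDerivAt_const_mul a)).div_const a).congr_deriv
      (by field_simp)
  rw [integral_Ioo_eq_sub_of_hasDerivAt zero_le_one hf
    (Continuous.intervalIntegrable (by fun_prop) 0 1)]
  simp [besselI0_zero, sub_div]

theorem integral_besselI1_comp_le {a : ℝ} (ha : 0 < a) :
    ∫ r in Ioo (0 : ℝ) 1, besselI1 (a * r) ≤ 2 * min 1 a⁻¹ * besselI1 a := by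
  have hI1 := besselI1_nonneg ha.le
  have hle_one : ∫ r in Ioo (0 : ℝ) 1, besselI1 (a * r) ≤ besselI1 a := by
    calc ∫ r in Ioo (0 : ℝ) 1, besselI1 (a * r) ≤ ∫ _ in Ioo (0 : ℝ) 1, besselI1 a :=
          setIntegral_mono_on (integrableOn_Ioo_of_continuous (by fun_prop) 0 1)
            (integrableOn_const (by simp)) measurableSet_Ioo fun r hr =>
            besselI1_le_of_le (by nlinarith [hr.1]) (by nlinarith [hr.2])
      _ = besselI1 a := by simp
  have hle_inv : ∫ r in Ioo (0 : ℝ) 1, besselI1 (a * r) ≤ 2 * a⁻¹ * besselI1 a := by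
    rw [integral_besselI1_comp ha.ne', div_eq_inv_mul]
    have := besselI0_le_one_add_two_mul_besselI1 ha.le
    have := inv_pos.2 ha
    nlinarith
  rcases le_total a 1 with h | h
  · rw [min_eq_left (one_le_inv₀ ha |>.2 h)]
    linarith
  · rwa [min_eq_right (inv_le_one_of_one_le₀ h)]

theorem hasDerivAt_mul_besselI1_comp {a : ℝ} (ha : a ≠ 0) (r : ℝ) :
    HasDerivAt (fun s => s * besselI1 (a * s)) (a * r * besselI0 (a * r)) r := by
  have h := ((hasDerivAt_mul_besselI1 (a * r)).comp r (hasDerivAt_const_mul a)).const_mul a⁻¹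
  refine (h.congr_deriv (by field_simp)).congr_of_eventuallyEq (Eventually.of_forall fun s => ?_)
  simp only [Function.comp]
  field_simp

theorem integral_mul_besselI0_comp {a : ℝ} (ha : a ≠ 0) :
    ∫ r in Ioo (0 : ℝ) 1, a * r * besselI0 (a * r) = besselI1 a := by
  rw [integral_Ioo_eq_sub_of_hasDerivAt zero_le_one
    (fun r _ => hasDerivAt_mul_besselI1_comp ha r)
    (Continuous.intervalIntegrable (by fun_prop) 0 1)]
  simp

theorem integral_sq_besselI1_comp_mul_le {a : ℝ} (ha : 0 < a) :
    ∫ r in Ioo (0 : ℝ) 1, besselI1 (a * r) ^ 2 * r ≤ 2 * min 1 a⁻¹ * besselI1 a ^ 2 := by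
  have hI1 := besselI1_nonneg ha.le
  calc ∫ r in Ioo (0 : ℝ) 1, besselI1 (a * r) ^ 2 * r
      ≤ ∫ r in Ioo (0 : ℝ) 1, besselI1 a * besselI1 (a * r) := by
        refine setIntegral_mono_of_nonneg (fun r hr => by have := hr.1; positivity) (fun r hr => ?_)
          (integrableOn_Ioo_of_continuous (by fun_prop) 0 1)
        have har : 0 ≤ a * r := mul_nonneg ha.le hr.1.le
        have h₀ := besselI1_nonneg har
        have h₁ := besselI1_le_of_le (y := a) har (by nlinarith [hr.2])
        nlinarith [hr.2, mul_le_mul_of_nonneg_left hr.2.le (sq_nonneg (besselI1 (a * r)))]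
    _ = besselI1 a * ∫ r in Ioo (0 : ℝ) 1, besselI1 (a * r) := integral_const_mul _ _
    _ ≤ besselI1 a * (2 * min 1 a⁻¹ * besselI1 a) := by
        gcongr; exact integral_besselI1_comp_le ha
    _ = 2 * min 1 a⁻¹ * besselI1 a ^ 2 := by ring

theorem integral_sq_mul_besselI0_comp_div_le {a : ℝ} (ha : 0 < a) :
    ∫ r in Ioo (0 : ℝ) 1, (a * r * besselI0 (a * r)) ^ 2 / r ≤ 4 * max 1 a * besselI1 a ^ 2 := by
  calc ∫ r in Ioo (0 : ℝ) 1, (a * r * besselI0 (a * r)) ^ 2 / r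
      ≤ ∫ r in Ioo (0 : ℝ) 1, a * besselI0 a * (a * r * besselI0 (a * r)) := by
        refine setIntegral_mono_of_nonneg (fun r hr => by have := hr.1; positivity) (fun r hr => ?_)
          (integrableOn_Ioo_of_continuous (by fun_prop) 0 1)
        have har : 0 ≤ a * r := mul_nonneg ha.le hr.1.le
        have h₀ := besselI0_nonneg (a * r)
        have h₁ := besselI0_le_of_le (y := a) har (by nlinarith [hr.2])
        rw [show (a * r * besselI0 (a * r)) ^ 2 / r
            = a * besselI0 (a * r) * (a * r * besselI0 (a * r)) by field_simp]
        gcongr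
    _ = a * besselI0 a * besselI1 a := by
        rw [integral_const_mul, integral_mul_besselI0_comp ha.ne']
    _ ≤ 4 * max 1 a * besselI1 a * besselI1 a :=
        mul_le_mul_of_nonneg_right (mul_besselI0_le ha.le) (besselI1_nonneg ha.le)
    _ = 4 * max 1 a * besselI1 a ^ 2 := by ring

theorem Lop_ofReal {f f' : ℝ → ℝ} {f'' r : ℝ} (hf : ∀ᶠ s in 𝓝 r, HasDerivAt f (f' s) s)
    (hf' : HasDerivAt f' f'' r) :
    Lop (fun s => (f s : ℂ)) r = ((f'' + f' r / r - f r / r ^ 2 : ℝ) : ℂ) := by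
  have hderiv : deriv (fun s => (f s : ℂ)) =ᶠ[𝓝 r] fun s => (f' s : ℂ) :=
    hf.mono fun s hs => hs.ofReal_comp.deriv
  rw [Lop, hderiv.deriv_eq, hf'.ofReal_comp.deriv, hderiv.eq_of_nhds]
  push_cast
  ring

lemma hasDerivAt_besselI1_comp {a s : ℝ} (ha : a ≠ 0) (hs : s ≠ 0) :
    HasDerivAt (fun s => besselI1 (a * s)) (a * besselI0 (a * s) - besselI1 (a * s) / s) s :=
  ((hasDerivAt_besselI1 (mul_ne_zero ha hs)).comp s (hasDerivAt_const_mul a)).congr_deriv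
    (by field_simp)

theorem Lop_besselI1_comp {a r : ℝ} (ha : a ≠ 0) (hr : r ≠ 0) :
    Lop (fun s => (besselI1 (a * s) : ℂ)) r = ((a ^ 2 * besselI1 (a * r) : ℝ) : ℂ) := by
  have hf := (eventually_ne_nhds hr).mono fun s hs => hasDerivAt_besselI1_comp ha hs
  have hf' := (((hasDerivAt_besselI0 (a * r)).comp r (hasDerivAt_const_mul a)).const_mul a).sub
    ((hasDerivAt_besselI1_comp ha hr).div (hasDerivAt_id r) hr)
  rw [Lop_ofReal hf hf']
  congr 1
  simp only [id]
  field_simp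
  ring

theorem deriv_ofReal_mul_besselI1_comp {a : ℝ} (ha : a ≠ 0) (r : ℝ) :
    deriv (fun s : ℝ => (s : ℂ) * (besselI1 (a * s) : ℂ)) r
      = ((a * r * besselI0 (a * r) : ℝ) : ℂ) := by
  have h := (hasDerivAt_mul_besselI1_comp ha r).ofReal_comp
  push_cast at h ⊢
  exact h.deriv

theorem deriv_ofReal_mul_Lop_besselI1_comp {a r : ℝ} (ha : a ≠ 0) (hr : r ≠ 0) :
    deriv (fun s : ℝ => (s : ℂ) * Lop (fun t => (besselI1 (a * t) : ℂ)) s) r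
      = ((a ^ 2 * (a * r * besselI0 (a * r)) : ℝ) : ℂ) := by
  have hev : (fun s : ℝ => (s : ℂ) * Lop (fun t => (besselI1 (a * t) : ℂ)) s)
      =ᶠ[𝓝 r] fun s => ((a ^ 2 * (s * besselI1 (a * s)) : ℝ) : ℂ) :=
    (eventually_ne_nhds hr).mono fun s hs => by
      dsimp only
      rw [Lop_besselI1_comp ha hs]
      push_cast
      ring
  rw [hev.deriv_eq]
  exact (((hasDerivAt_mul_besselI1_comp ha r).const_mul (a ^ 2)).ofReal_comp).deriv

lemma sq_norm_ofReal (x : ℝ) : ‖(x : ℂ)‖ ^ 2 = x ^ 2 := by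
  rw [Complex.norm_real, Real.norm_eq_abs, sq_abs]

theorem integral_sq_norm_Lop_besselI1_comp_mul {a : ℝ} (ha : a ≠ 0) :
    ∫ r in Ioo (0 : ℝ) 1, ‖Lop (fun s : ℝ => (besselI1 (a * s) : ℂ)) r‖ ^ 2 * r
      = a ^ 4 * ∫ r in Ioo (0 : ℝ) 1, besselI1 (a * r) ^ 2 * r := by
  rw [← integral_const_mul]
  refine setIntegral_congr_fun measurableSet_Ioo fun r hr => ?_
  rw [Lop_besselI1_comp ha hr.1.ne', sq_norm_ofReal]
  ring

theorem integral_sq_norm_deriv_mul_Lop_besselI1_comp_div {a : ℝ} (ha : a ≠ 0) :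
    ∫ r in Ioo (0 : ℝ) 1,
        ‖deriv (fun s : ℝ => (s : ℂ) * Lop (fun t : ℝ => (besselI1 (a * t) : ℂ)) s) r‖ ^ 2 / r
      = a ^ 4 * ∫ r in Ioo (0 : ℝ) 1, (a * r * besselI0 (a * r)) ^ 2 / r := by
  rw [← integral_const_mul]
  refine setIntegral_congr_fun measurableSet_Ioo fun r hr => ?_
  rw [deriv_ofReal_mul_Lop_besselI1_comp ha hr.1.ne', sq_norm_ofReal]
  ring

theorem stmt_17 :
    ∃ C : ℝ, 0 < C ∧
      ∀ ξ : ℝ, ξ ≠ 0 →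
        ((∫ r in Ioo (0 : ℝ) 1, ‖(besselI1 (|ξ| * r) : ℂ)‖ ^ 2 * r)
            ≤ C * min 1 |ξ|⁻¹ * (besselI1 |ξ|) ^ 2)
        ∧ ((∫ r in Ioo (0 : ℝ) 1,
              ‖deriv (fun s : ℝ => (s : ℂ) * (besselI1 (|ξ| * s) : ℂ)) r‖ ^ 2 / r)
            ≤ C * max 1 |ξ| * (besselI1 |ξ|) ^ 2)
        ∧ ((∫ r in Ioo (0 : ℝ) 1, ‖Lop (fun s : ℝ => (besselI1 (|ξ| * s) : ℂ)) r‖ ^ 2 * r)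
            ≤ C * min 1 |ξ|⁻¹ * ξ ^ 4 * (besselI1 |ξ|) ^ 2)
        ∧ ((∫ r in Ioo (0 : ℝ) 1,
              ‖deriv (fun s : ℝ => (s : ℂ) * Lop (fun t : ℝ => (besselI1 (|ξ| * t) : ℂ)) s) r‖ ^ 2 / r)
            ≤ C * max 1 |ξ| * ξ ^ 4 * (besselI1 |ξ|) ^ 2) := by
  refine ⟨4, by norm_num, fun ξ hξ => ?_⟩
  have ha : 0 < |ξ| := abs_pos.2 hξ
  have h₁ := integral_sq_besselI1_comp_mul_le ha
  have h₂ := integral_sq_mul_besselI0_comp_div_le ha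
  have hmin : 0 ≤ min 1 |ξ|⁻¹ * besselI1 |ξ| ^ 2 := by positivity
  simp only [sq_norm_ofReal, deriv_ofReal_mul_besselI1_comp ha.ne']
  rw [integral_sq_norm_Lop_besselI1_comp_mul ha.ne',
    integral_sq_norm_deriv_mul_Lop_besselI1_comp_div ha.ne', ← Even.pow_abs (by decide) ξ]
  have h₃ := mul_le_mul_of_nonneg_left h₁ (pow_nonneg ha.le 4)
  have h₄ := mul_le_mul_of_nonneg_left h₂ (pow_nonneg ha.le 4)
  exact ⟨by linarith, h₂, by nlinarith [mul_nonneg (pow_nonneg ha.le 4) hmin], by linarith⟩
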